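/- arXiv:1604.05448 — 4 statements merged into one kernel-verified Lean document; each statement's English description precedes it below -/
import Mathlib

section
/- Online ridge leverage score determinant growth: let A be an n×d real matrix with rows a₁,…,aₙ, let Aᵢ denote the matrix of the first i rows, λ > 0, and lᵢ := min(aᵢᵀ (Aᵢ₋₁ᵀAᵢ₋₁ + λI)⁻¹ aᵢ, 1). Then det(Aᵢᵀ Aᵢ + λI) ≥ det(Aᵢ₋₁ᵀAᵢ₋₁ + λI) · (1 + lᵢ). -/
/-!
Appending the row `aᵢ` changes the regularized Gram matrix `M = Aᵢ₋₁ᵀAᵢ₋₁ + λI` by the rank-one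
term `aᵢaᵢᵀ`, so the matrix determinant lemma gives `det (M + aᵢaᵢᵀ) = det M · (1 + aᵢᵀM⁻¹aᵢ)`
exactly. As `M` is positive definite, `det M > 0`, and truncating the leverage score at `1` can only
decrease the right-hand side.
-/

open Matrix

/-- The matrix of the first `k` rows of `A`. -/
def firstRows {n d : ℕ} (A : Matrix (Fin n) (Fin d) ℝ) (k : ℕ) (h : k ≤ n) :
    Matrix (Fin k) (Fin d) ℝ := fun i j => A (Fin.castLE h i) j

namespace Matrix

theorem det_add_vecMulVec {m R : Type*} [Fintype m] [DecidableEq m] [CommRing R]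
    {M : Matrix m m R} (hM : IsUnit M.det) (u v : m → R) :
    (M + vecMulVec u v).det = M.det * (1 + v ⬝ᵥ M⁻¹ *ᵥ u) := by
  rw [vecMulVec_eq Unit, det_add_replicateCol_mul_replicateRow hM,
    det_unique (n := Unit), Matrix.mul_assoc, ← replicateCol_mulVec, add_apply, one_apply_eq,
    replicateRow_mul_replicateCol_apply]

theorem posDef_transpose_mul_self_add_smul_one {m k : Type*} [Fintype m] [DecidableEq m]
    [Fintype k] (B : Matrix k m ℝ) {lam : ℝ} (hlam : 0 < lam) :
    (Bᵀ * B + lam • (1 : Matrix m m ℝ)).PosDef :=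
  PosDef.posSemidef_add (posSemidef_conjTranspose_mul_self B) (PosDef.one.smul hlam)

end Matrix

theorem transpose_mul_self_firstRows_succ {n d : ℕ} (A : Matrix (Fin n) (Fin d) ℝ) (i : Fin n) :
    (firstRows A (i + 1) i.2)ᵀ * firstRows A (i + 1) i.2 =
      (firstRows A i i.2.le)ᵀ * firstRows A i i.2.le + vecMulVec (A i) (A i) := by
  ext j l
  simp only [mul_apply, transpose_apply, Matrix.add_apply, vecMulVec_apply, Fin.sum_univ_castSucc]
  rfl

/-- Online ridge leverage score determinant growth:
`det(AᵢᵀAᵢ + λI) ≥ det(Aᵢ₋₁ᵀAᵢ₋₁ + λI) · (1 + lᵢ)` where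
`lᵢ = min(aᵢᵀ(Aᵢ₋₁ᵀAᵢ₋₁ + λI)⁻¹aᵢ, 1)`. -/
theorem online_determinant_growth {n d : ℕ} (A : Matrix (Fin n) (Fin d) ℝ)
    (lam : ℝ) (hlam : 0 < lam) (i : Fin n) :
    ((firstRows A (i + 1) i.2)ᵀ * firstRows A (i + 1) i.2 +
        lam • (1 : Matrix (Fin d) (Fin d) ℝ)).det ≥
      ((firstRows A i i.2.le)ᵀ * firstRows A i i.2.le +
          lam • (1 : Matrix (Fin d) (Fin d) ℝ)).det *
        (1 + min (A i ⬝ᵥ ((firstRows A i i.2.le)ᵀ * firstRows A i i.2.le +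
            lam • (1 : Matrix (Fin d) (Fin d) ℝ))⁻¹.mulVec (A i)) 1) := by
  have hM := posDef_transpose_mul_self_add_smul_one (firstRows A i i.2.le) hlam
  rw [transpose_mul_self_firstRows_succ A i, add_right_comm,
    det_add_vecMulVec hM.det_pos.ne'.isUnit]
  gcongr
  · exact hM.det_pos.le
  · exact min_le_left _ _
end

section
/- Sum of online ridge leverage scores bound: with the setup above, ∑_{i=1}^n lᵢ ≤ 2 d log(1 + ‖A‖₂²/λ), where ‖A‖₂ is the spectral (operator) norm of A. -/
/-!
Write `Gₖ = AₖᵀAₖ + λI` and `xᵢ = aᵢᵀGᵢ₋₁⁻¹aᵢ`, so that `lᵢ = min(xᵢ, 1)`. Since `Gₖ = Gₖ₋₁ + aₖaₖᵀ`,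
the matrix determinant lemma gives `det Gₖ = det Gₖ₋₁ · (1 + xₖ)`, which telescopes to
`∏ᵢ (1 + xᵢ) = det(AᵀA + λI) / λᵈ ≤ ((‖A‖₂² + λ) / λ)ᵈ`. Taking logarithms and using
`min(x, 1) ≤ 2 log(1 + x)` for `x ≥ 0` gives the bound.
-/

open Matrix

/-- The online `λ`-ridge leverage score of the `i`th row of `A`:
`lᵢ = min(aᵢᵀ(Aᵢ₋₁ᵀAᵢ₋₁ + λI)⁻¹aᵢ, 1)`. -/
noncomputable def onlineScore {n d : ℕ} (A : Matrix (Fin n) (Fin d) ℝ)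
    (lam : ℝ) (i : Fin n) : ℝ :=
  min (A i ⬝ᵥ ((firstRows A i i.2.le)ᵀ * firstRows A i i.2.le +
      lam • (1 : Matrix (Fin d) (Fin d) ℝ))⁻¹.mulVec (A i)) 1

theorem Real.min_le_two_mul_log_one_add {x : ℝ} (hx : 0 ≤ x) :
    min x 1 ≤ 2 * Real.log (1 + x) := by
  have hmin : min x 1 ≤ 2 * (2 * x / (x + 2)) := by
    rw [mul_div_assoc', le_div_iff₀ (by linarith)]
    rcases le_total x 1 with h | h
    · rw [min_eq_left h]; nlinarith
    · rw [min_eq_right h]; linarith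
  linarith [Real.le_log_one_add_of_nonneg hx]

theorem Matrix.det_add_vecMulVec_s3 {m R : Type*} [Fintype m] [DecidableEq m] [CommRing R]
    {M : Matrix m m R} (hM : IsUnit M.det) (u v : m → R) :
    (M + vecMulVec u v).det = M.det * (1 + v ⬝ᵥ M⁻¹ *ᵥ u) := by
  rw [vecMulVec_eq Unit, det_add_replicateCol_mul_replicateRow hM, det_unique (1 + _), add_apply,
    one_apply_eq, Matrix.mul_assoc]
  rfl

theorem Matrix.IsHermitian.det_add_smul_one {m 𝕜 : Type*} [Fintype m] [DecidableEq m]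
    [RCLike 𝕜] {B : Matrix m m 𝕜} (hB : B.IsHermitian) (c : 𝕜) :
    (B + c • 1).det = ∏ i, ((hB.eigenvalues i : 𝕜) + c) := by
  have hcharpoly := congrArg (Polynomial.eval (-c)) hB.charpoly_eq
  rw [eval_charpoly, Polynomial.eval_prod] at hcharpoly
  have hneg : B + c • 1 = -(scalar m (-c) - B) := by
    simp [sub_eq_add_neg, smul_one_eq_diagonal]
  rw [hneg, det_neg, hcharpoly, Fintype.card, ← Finset.prod_const, ← Finset.prod_mul_distrib]
  simp

theorem Matrix.PosSemidef.det_add_smul_one_le {m : Type*} [Fintype m] [DecidableEq m]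
    {B : Matrix m m ℝ} (hB : B.PosSemidef) {c : ℝ} (hc : 0 ≤ c) :
    (B + c • 1).det ≤ ((⨆ i, hB.1.eigenvalues i) + c) ^ Fintype.card m := by
  rw [hB.1.det_add_smul_one, ← Finset.card_univ, ← Finset.prod_const]
  simp only [RCLike.ofReal_real_eq_id, id_eq]
  refine Finset.prod_le_prod (fun i _ => ?_) (fun i _ => ?_)
  · linarith [hB.eigenvalues_nonneg i]
  · gcongr
    exact le_ciSup (Set.finite_range _).bddAbove i

section RidgeGram

variable {n d : ℕ} (A : Matrix (Fin n) (Fin d) ℝ) (lam : ℝ)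

noncomputable def ridgeGram (k : ℕ) (h : k ≤ n) : Matrix (Fin d) (Fin d) ℝ :=
  (firstRows A k h)ᵀ * firstRows A k h + lam • 1

noncomputable def ridgeScore (i : Fin n) : ℝ :=
  A i ⬝ᵥ (ridgeGram A lam i i.2.le)⁻¹ *ᵥ A i

theorem onlineScore_eq_min_ridgeScore (i : Fin n) :
    onlineScore A lam i = min (ridgeScore A lam i) 1 := rfl

theorem ridgeGram_self : ridgeGram A lam n le_rfl = Aᵀ * A + lam • 1 := rfl

theorem ridgeGram_zero (h : 0 ≤ n) : ridgeGram A lam 0 h = lam • 1 := by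
  simp [ridgeGram]

theorem ridgeGram_succ (k : ℕ) (h : k + 1 ≤ n) :
    ridgeGram A lam (k + 1) h =
      ridgeGram A lam k (k.le_succ.trans h) + vecMulVec (A ⟨k, h⟩) (A ⟨k, h⟩) := by
  ext p q
  simp only [ridgeGram, Matrix.add_apply, mul_apply, transpose_apply, firstRows, vecMulVec_apply,
    Fin.sum_univ_castSucc]
  rw [add_right_comm]
  rfl

variable {lam}

theorem ridgeGram_posDef (hlam : 0 < lam) (k : ℕ) (h : k ≤ n) : (ridgeGram A lam k h).PosDef := by
  have hgram : ((firstRows A k h)ᵀ * firstRows A k h).PosSemidef := by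
    simpa using posSemidef_conjTranspose_mul_self (firstRows A k h)
  exact PosDef.posSemidef_add hgram (PosDef.one.smul hlam)

theorem ridgeScore_nonneg (hlam : 0 < lam) (i : Fin n) : 0 ≤ ridgeScore A lam i :=
  (ridgeGram_posDef A hlam i i.2.le).inv.posSemidef.dotProduct_mulVec_nonneg (A i)

theorem det_ridgeGram (hlam : 0 < lam) (k : ℕ) (h : k ≤ n) :
    (ridgeGram A lam k h).det = lam ^ d * ∏ i : Fin k, (1 + ridgeScore A lam (Fin.castLE h i)) := by
  induction k with
  | zero => simp [ridgeGram_zero]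
  | succ k ih =>
    rw [ridgeGram_succ, det_add_vecMulVec_s3 (ridgeGram_posDef A hlam k _).det_pos.ne'.isUnit, ih,
      Fin.prod_univ_castSucc, mul_assoc]
    rfl

theorem prod_one_add_ridgeScore_le (hlam : 0 < lam) (hA : (Aᵀ * A).IsHermitian) :
    ∏ i, (1 + ridgeScore A lam i) ≤ (1 + (⨆ i, hA.eigenvalues i) / lam) ^ d := by
  have hgram : (Aᵀ * A).PosSemidef := by simpa using posSemidef_conjTranspose_mul_self A
  have hdet := det_ridgeGram A hlam n le_rfl
  simp only [ridgeGram_self, Fin.castLE_refl] at hdet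
  have hle := hgram.det_add_smul_one_le hlam.le
  rw [hdet, Fintype.card_fin] at hle
  rw [one_add_div hlam.ne', add_comm lam, div_pow, le_div_iff₀' (by positivity)]
  exact hle

end RidgeGram

/-- Sum of online ridge leverage scores: `∑ᵢ lᵢ ≤ 2 d log(1 + ‖A‖₂²/λ)`,
where `‖A‖₂²` is the largest eigenvalue of `AᵀA`. -/
theorem sum_online_scores_le {n d : ℕ} (A : Matrix (Fin n) (Fin d) ℝ)
    (lam : ℝ) (hlam : 0 < lam)
    (hA : (Aᵀ * A).IsHermitian) (s : ℝ) (hs : s = ⨆ i, hA.eigenvalues i) :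
    ∑ i : Fin n, onlineScore A lam i ≤ 2 * d * Real.log (1 + s / lam) := by
  have hpos (i : Fin n) : 0 < 1 + ridgeScore A lam i := by
    linarith [ridgeScore_nonneg A hlam i]
  calc ∑ i, onlineScore A lam i
      ≤ ∑ i, 2 * Real.log (1 + ridgeScore A lam i) :=
        Finset.sum_le_sum fun i _ => (onlineScore_eq_min_ridgeScore A lam i).symm ▸
          Real.min_le_two_mul_log_one_add (ridgeScore_nonneg A hlam i)
    _ = 2 * Real.log (∏ i, (1 + ridgeScore A lam i)) := by
        rw [Real.log_prod fun i _ => (hpos i).ne', Finset.mul_sum]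
    _ ≤ 2 * Real.log ((1 + s / lam) ^ d) := by
        gcongr
        · exact Finset.prod_pos fun i _ => hpos i
        · exact hs ▸ prod_one_add_ridgeScore_le A hlam hA
    _ = 2 * d * Real.log (1 + s / lam) := by rw [Real.log_pow]; ring
end

section
/- In the Online-BSS algorithm, if the barrier gaps X^U = B^U − ÃᵀÃ and X^L = ÃᵀÃ − B^L are positive definite and a row a arrives with p := min(c_U·aᵀ(X^U)⁻¹a + c_L·aᵀ(X^L)⁻¹a, 1) < 1 where c_U, c_L > 1, then a aᵀ/p ≺ X^U and a aᵀ ≺ X^L; in particular, subtracting a aᵀ/p from X^U leaves it positive definite, and subtracting a aᵀ from X^L leaves it positive definite. -/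
open Matrix

lemma aux_rank_one_sub {d : ℕ} (X : Matrix (Fin d) (Fin d) ℝ) (hX : X.PosDef)
    (a : Fin d → ℝ) (t : ℝ) (ht : 0 < t) (h : a ⬝ᵥ X⁻¹.mulVec a < t) :
    (X - (1 / t) • vecMulVec a a).PosDef := by
  have hdet : IsUnit X.det := isUnit_iff_ne_zero.mpr hX.det_pos.ne'
  have hXinv : X * X⁻¹ = 1 := Matrix.mul_nonsing_inv X hdet
  have hXs : ∀ i j, X j i = X i j := by
    intro i j
    have := congrFun (congrFun hX.1 i) j
    simpa [Matrix.conjTranspose_apply] using this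
  refine Matrix.PosDef.of_dotProduct_mulVec_pos ?_ ?_
  · show (X - (1 / t) • vecMulVec a a)ᴴ = _
    ext i j
    simp only [Matrix.conjTranspose_apply, Matrix.sub_apply, Matrix.smul_apply,
      vecMulVec_apply, star_trivial, smul_eq_mul]
    rw [hXs j i]; ring
  · intro x hx
    set y : Fin d → ℝ := X⁻¹.mulVec a with hy
    have hXy : X.mulVec y = a := by
      rw [hy, Matrix.mulVec_mulVec, hXinv, Matrix.one_mulVec]
    set A : ℝ := x ⬝ᵥ X.mulVec x with hA
    set C : ℝ := y ⬝ᵥ X.mulVec y with hC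
    set B : ℝ := a ⬝ᵥ x with hB
    have hApos : 0 < A := by simpa using hX.dotProduct_mulVec_pos hx
    have hCval : C = a ⬝ᵥ X⁻¹.mulVec a := by
      rw [hC, hXy, hy, dotProduct_comm]
    have hsym : ∀ u v : Fin d → ℝ, u ⬝ᵥ X.mulVec v = v ⬝ᵥ X.mulVec u := by
      intro u v
      simp only [dotProduct, Matrix.mulVec, dotProduct, Finset.mul_sum]
      rw [Finset.sum_comm]
      exact Finset.sum_congr rfl fun i _ => Finset.sum_congr rfl fun j _ => by
        rw [hXs i j]; ring
    have hBeq : B = y ⬝ᵥ X.mulVec x := by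
      rw [hB, ← hXy, hsym, dotProduct_comm]
    have hCS : B ^ 2 ≤ C * A := by
      by_cases hy0 : y = 0
      · have : a = 0 := by rw [← hXy, hy0, Matrix.mulVec_zero]
        simp [hB, this, hC, hy0]
      · have hCpos : 0 < C := by simpa using hX.dotProduct_mulVec_pos hy0
        have hz := hX.posSemidef.dotProduct_mulVec_nonneg (C • x - B • y)
        simp only [star_trivial] at hz
        have hexp : (C • x - B • y) ⬝ᵥ X.mulVec (C • x - B • y)
            = C * (C * A - B ^ 2) := by
          simp only [Matrix.mulVec_sub, Matrix.mulVec_smul, dotProduct_sub,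
            sub_dotProduct, smul_dotProduct, dotProduct_smul,
            smul_eq_mul]
          rw [← hA, ← hC]
          have h1 : x ⬝ᵥ X.mulVec y = B := by rw [hsym, ← hBeq]
          have h2 : y ⬝ᵥ X.mulVec x = B := hBeq.symm
          rw [h1, h2]; ring
        rw [hexp] at hz
        nlinarith
    have hkey : x ⬝ᵥ (X - (1 / t) • vecMulVec a a).mulVec x = A - B ^ 2 / t := by
      simp only [Matrix.sub_mulVec, Matrix.smul_mulVec, dotProduct_sub,
        dotProduct_smul, smul_eq_mul]
      rw [← hA]
      have hvv : x ⬝ᵥ (vecMulVec a a).mulVec x = B ^ 2 := by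
        simp only [Matrix.mulVec, dotProduct, vecMulVec_apply, hB, Finset.mul_sum]
        rw [sq, Finset.sum_mul_sum]
        exact Finset.sum_congr rfl fun i _ => Finset.sum_congr rfl fun j _ => by ring
      rw [hvv]; ring
    have hgoal : 0 < x ⬝ᵥ (X - (1 / t) • vecMulVec a a).mulVec x := by
      rw [hkey]
      have hClt : C < t := by rw [hCval]; exact h
      have : B ^ 2 / t < A := by
        rcases lt_or_ge 0 (B ^ 2) with hB2 | hB2
        · have h1 : B ^ 2 / t ≤ C * A / t := (div_le_div_iff_of_pos_right ht).mpr hCS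
          have h2 : C * A / t < A := by
            rw [div_lt_iff₀ ht]; nlinarith
          linarith
        · have : B ^ 2 = 0 := le_antisymm hB2 (sq_nonneg B)
          rw [this]; simpa using hApos
      linarith
    simpa using hgoal

/-- Online-BSS barrier maintenance: if `X^U, X^L ≻ 0`, `c_U, c_L > 1` and
`p = c_U·aᵀ(X^U)⁻¹a + c_L·aᵀ(X^L)⁻¹a < 1`, then `X^U − (1/p)·a aᵀ` and
`X^L − a aᵀ` are positive definite. -/
theorem online_bss_barriers {d : ℕ} (XU XL : Matrix (Fin d) (Fin d) ℝ)
    (hXU : XU.PosDef) (hXL : XL.PosDef) (a : Fin d → ℝ) (ha : a ≠ 0)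
    (cU cL : ℝ) (hcU : 1 < cU) (hcL : 1 < cL)
    (p : ℝ) (hp : p = cU * (a ⬝ᵥ XU⁻¹.mulVec a) + cL * (a ⬝ᵥ XL⁻¹.mulVec a))
    (hp1 : p < 1) :
    (XU - (1 / p) • vecMulVec a a).PosDef ∧ (XL - vecMulVec a a).PosDef := by
  have hqU : 0 < a ⬝ᵥ XU⁻¹.mulVec a := by simpa using hXU.inv.dotProduct_mulVec_pos ha
  have hqL : 0 < a ⬝ᵥ XL⁻¹.mulVec a := by simpa using hXL.inv.dotProduct_mulVec_pos ha
  have hpU : a ⬝ᵥ XU⁻¹.mulVec a < p := by nlinarith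
  have hpL : a ⬝ᵥ XL⁻¹.mulVec a < 1 := by nlinarith
  have hppos : 0 < p := lt_trans hqU hpU
  refine ⟨aux_rank_one_sub XU hXU a p hppos hpU, ?_⟩
  have := aux_rank_one_sub XL hXL a 1 one_pos hpL
  simpa using this
end

section
/- Single-step potential bound in the sample-size analysis: let l ∈ [0,1], ε ∈ (0,1), c := 8 log d/ε² (with d ≥ 2 so c ≥ 4), and p := c·l ≤ 1. Then p·(1 + l/4)·(1 + 1/((1+ε)c))⁻¹ + (1 − p)·(1 + l/4) ≤ (1 + l/4)(1 − l/4) ≤ 1. -/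
/-! The factor `(1 + 1/x)⁻¹` with `x = (1 + ε) c` equals `1 - 1/(x + 1)`, so the left-hand side
is `(1 + l/4)(1 - p/(x + 1))`. Since `x + 1 ≤ 2c + 1 ≤ 4c`, the discount `p/(x + 1) = c l/(x + 1)`
is at least `l/4`. -/

theorem mul_inv_one_add_one_div_add_one_sub {x : ℝ} (hx : 0 < x) (p : ℝ) :
    p * (1 + 1 / x)⁻¹ + (1 - p) = 1 - p / (x + 1) := by
  rw [one_add_div hx.ne', inv_div]
  field_simp
  ring

theorem div_four_le_mul_div {c l y : ℝ} (hl : 0 ≤ l) (hy : 0 < y) (hyc : y ≤ 4 * c) :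
    l / 4 ≤ c * l / y := by
  rw [div_le_div_iff₀ four_pos hy]
  nlinarith

theorem single_step_potential_bound_general (l ε c p : ℝ)
    (hl0 : 0 ≤ l) (hε0 : 0 < ε) (hε1 : ε < 1)
    (hc : 4 ≤ c) (hp : p = c * l) :
    p * (1 + l / 4) * (1 + 1 / ((1 + ε) * c))⁻¹ + (1 - p) * (1 + l / 4) ≤
        (1 + l / 4) * (1 - l / 4) ∧
      (1 + l / 4) * (1 - l / 4) ≤ 1 := by
  have hx : 0 < (1 + ε) * c := by positivity
  have hdiscount : l / 4 ≤ p / ((1 + ε) * c + 1) := by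
    rw [hp]
    exact div_four_le_mul_div hl0 (by positivity) (by nlinarith)
  constructor
  · calc p * (1 + l / 4) * (1 + 1 / ((1 + ε) * c))⁻¹ + (1 - p) * (1 + l / 4)
          = (1 + l / 4) * (p * (1 + 1 / ((1 + ε) * c))⁻¹ + (1 - p)) := by ring
        _ = (1 + l / 4) * (1 - p / ((1 + ε) * c + 1)) := by
          rw [mul_inv_one_add_one_div_add_one_sub hx]
        _ ≤ (1 + l / 4) * (1 - l / 4) := by gcongr
  · nlinarith [sq_nonneg l]

/-- Single-step potential bound in the sample-size analysis: for `l ∈ [0,1]`,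
`ε ∈ (0,1)`, `c ≥ 4` and `p = c·l ≤ 1`,
`p(1 + l/4)(1 + 1/((1+ε)c))⁻¹ + (1 − p)(1 + l/4) ≤ (1 + l/4)(1 − l/4) ≤ 1`. -/
theorem single_step_potential_bound (l ε c p : ℝ)
    (hl0 : 0 ≤ l) (hl1 : l ≤ 1) (hε0 : 0 < ε) (hε1 : ε < 1)
    (hc : 4 ≤ c) (hp : p = c * l) (hp1 : p ≤ 1) :
    p * (1 + l / 4) * (1 + 1 / ((1 + ε) * c))⁻¹ + (1 - p) * (1 + l / 4) ≤
        (1 + l / 4) * (1 - l / 4) ∧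
      (1 + l / 4) * (1 - l / 4) ≤ 1 :=
  single_step_potential_bound_general l ε c p hl0 hε0 hε1 hc hp
end
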